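/- Let a,b ∈ ℂ and set L = a·1₄ + b·E·E' (with E·E' the rank-one 4×4 matrix given by the product of the column E and the row E'). Then L satisfies the two equations (L ⊗ 1₂)(1₂ ⊗ L)(E ⊗ 1₂) = 1₂ ⊗ E and (1₂ ⊗ E')(L ⊗ 1₂)(1₂ ⊗ L) = E' ⊗ 1₂ if and only if (a,b) = (i,-i) or (a,b) = (-i,i), i.e. if and only if L = ±i(1₄ - EE'). -/
import Mathlib


open Matrix Complex

noncomputable section

/-- Kronecker product of `Fin`-indexed matrices, with the standard (lexicographic)
Kronecker ordering of indices. -/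
def kron {m n p q : ℕ} (A : Matrix (Fin m) (Fin n) ℂ) (B : Matrix (Fin p) (Fin q) ℂ) :
    Matrix (Fin (m * p)) (Fin (n * q)) ℂ :=
  Matrix.of fun i j => A i.divNat j.divNat * B i.modNat j.modNat

/-- E = e₁⊗e₂ + e₂⊗e₁ as a column vector. -/
def Evec : Matrix (Fin 4) (Fin 1) ℂ := !![0; 1; 1; 0]

/-- E' = e¹⊗e² + e²⊗e¹ as a row vector. -/
def Evec' : Matrix (Fin 1) (Fin 4) ℂ := !![0, 1, 1, 0]

/-- 2×2 identity matrix. -/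
def one2 : Matrix (Fin 2) (Fin 2) ℂ := 1

/-- `L = a·1₄ + b·E·E'`. -/
def Lmat (a b : ℂ) : Matrix (Fin 4) (Fin 4) ℂ :=
  a • (1 : Matrix (Fin 4) (Fin 4) ℂ) + b • (Evec * Evec')

lemma fv8 (k : ℕ) (h : k < 4 * 2) : ((⟨k, h⟩ : Fin (4 * 2)) : ℕ) = k := rfl
lemma fv8' (k : ℕ) (h : k < 2 * 4) : ((⟨k, h⟩ : Fin (2 * 4)) : ℕ) = k := rfl

set_option maxHeartbeats 2000000 in
/-- With `E = e₁⊗e₂ + e₂⊗e₁` and `E' = e¹⊗e² + e²⊗e¹`, the matrix `L = a·1₄ + b·EE'`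
satisfies `(L⊗1)(1⊗L)(E⊗1) = 1⊗E` and `(1⊗E')(L⊗1)(1⊗L) = E'⊗1` iff
`(a,b) = (i,-i)` or `(a,b) = (-i,i)`, i.e. iff `L = ±i(1₄ - EE')`. -/
theorem L_solutions_qminus (a b : ℂ) :
    ((kron (Lmat a b) one2 * kron one2 (Lmat a b) * kron Evec one2 = kron one2 Evec) ∧
     (kron one2 Evec' * kron (Lmat a b) one2 * kron one2 (Lmat a b) = kron Evec' one2))
    ↔ ((a = I ∧ b = -I) ∨ (a = -I ∧ b = I)) := by
  constructor
  · rintro ⟨h1, _h2⟩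
    have e1 := congrFun (congrFun h1 1) 0
    have e2 := congrFun (congrFun h1 3) 1
    simp [kron, Lmat, Evec, Evec', one2, Matrix.mul_apply, Fin.sum_univ_succ,
      Fin.divNat, Fin.modNat, Matrix.one_apply, Fin.ext_iff, fv8, fv8',
      show ((3 : Fin (4*2)) : ℕ) = 3 from rfl,
      show ((3 : Fin (2*4)) : ℕ) = 3 from rfl] at e1 e2
    have hab : a * b = 1 := by linear_combination e1
    have hsq : (a + b) ^ 2 = 0 := by linear_combination e2 - 2 * e1 + 2 * hab
    have hba : b = -a := by
      have h0 : a + b = 0 := sq_eq_zero_iff.mp hsq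
      linear_combination h0
    subst hba
    have hfac : (a - I) * (a + I) = 0 := by
      linear_combination -hab - Complex.I_sq
    rcases mul_eq_zero.mp hfac with h | h
    · exact Or.inl ⟨by linear_combination h, by linear_combination -h⟩
    · exact Or.inr ⟨by linear_combination h, by linear_combination -h⟩
  · rintro (⟨rfl, rfl⟩ | ⟨rfl, rfl⟩) <;>
      refine ⟨?_, ?_⟩ <;>
      · ext i j
        fin_cases i <;> fin_cases j <;>
          simp [kron, Lmat, Evec, Evec', one2, Matrix.mul_apply, Fin.sum_univ_succ,
            Fin.divNat, Fin.modNat, Matrix.one_apply, Fin.ext_iff, fv8, fv8',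
            show ((3 : Fin (4*2)) : ℕ) = 3 from rfl, show ((4 : Fin (4*2)) : ℕ) = 4 from rfl,
            show ((5 : Fin (4*2)) : ℕ) = 5 from rfl, show ((6 : Fin (4*2)) : ℕ) = 6 from rfl,
            show ((7 : Fin (4*2)) : ℕ) = 7 from rfl,
            show ((3 : Fin (2*4)) : ℕ) = 3 from rfl, show ((4 : Fin (2*4)) : ℕ) = 4 from rfl,
            show ((5 : Fin (2*4)) : ℕ) = 5 from rfl, show ((6 : Fin (2*4)) : ℕ) = 6 from rfl,
            show ((7 : Fin (2*4)) : ℕ) = 7 from rfl]
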